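/- Let K and L be subfields of Q̄, and assume that either K/(K ∩ L) or L/(K ∩ L) is a (possibly infinite) Galois extension. Then N_K ∘ N_L = N_L ∘ N_K as maps on G; that is, N_K(N_L(α)) = N_L(N_K(α)) for every α ∈ G. -/

import Mathlib

noncomputable section

/-- A fixed algebraic closure of `ℚ`. -/
abbrev Qbar : Type := AlgebraicClosure ℚ

/-- The primitive integer minimal polynomial of an algebraic number. -/
noncomputable def intMinpoly (α : Qbar) : Polynomial ℤ :=
  (IsLocalization.integerNormalization (nonZeroDivisors ℤ) (minpoly ℚ α)).primPart

/-- The absolute logarithmic Weil height of an algebraic number, defined via the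
(logarithmic) Mahler measure of its primitive integer minimal polynomial. -/
noncomputable def weilHeight (α : Qbar) : ℝ :=
  ((minpoly ℚ α).natDegree : ℝ)⁻¹ *
    (Real.log |((intMinpoly α).leadingCoeff : ℝ)| +
      (((intMinpoly α).map (Int.castRingHom ℂ)).roots.map
        (fun z => Real.log (max 1 ‖z‖))).sum)

/-- `σ` is an automorphism of `Q̄` fixing `K` pointwise, i.e. `σ ∈ Aut(Q̄/K)`. -/
def fixes (K : Subfield Qbar) (σ : Qbar ≃+* Qbar) : Prop := ∀ x ∈ K, σ x = x

/-- The group `Q̄^×`. -/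
abbrev Qx : Type := Qbarˣ

/-- `G = Q̄^× / Tor(Q̄^×)`. -/
abbrev GG : Type := Qx ⧸ CommGroup.torsion Qx

/-- The Weil height descends to `G`: since `h` is constant on cosets of the torsion
subgroup, the infimum below equals the common value of `h` at any representative. -/
noncomputable def hG (x : GG) : ℝ :=
  sInf {r : ℝ | ∃ u : Qx, (QuotientGroup.mk u : GG) = x ∧ r = weilHeight (u : Qbar)}

/-- The image `G_K` of `K^×` in `G`. -/
def GK (K : Subfield Qbar) : Set GG :=
  {x | ∃ u : Qx, (u : Qbar) ∈ K ∧ (QuotientGroup.mk u : GG) = x}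

/-- `span_ℚ G_K = { β ∈ G : β^m ∈ G_K for some nonzero integer m }`. -/
def spanGK (K : Subfield Qbar) : Set GG :=
  {x | ∃ m : ℤ, m ≠ 0 ∧ x ^ m ∈ GK K}

/-- The action of an automorphism of `Q̄` on `G = Q̄^×/Tor(Q̄^×)`. -/
def autG (σ : Qbar ≃+* Qbar) : GG →* GG :=
  QuotientGroup.map _ _ (Units.map (σ : Qbar →* Qbar))
    (fun u hu => by
      rw [Subgroup.mem_comap]
      rw [CommGroup.mem_torsion] at hu ⊢
      exact MonoidHom.isOfFinOrder _ hu)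

/-- The orbit of `x ∈ G` under the action of `Aut(Q̄/K)` on `G`. -/
def OrbG (K : Subfield Qbar) (x : GG) : Set GG :=
  {y | ∃ σ : Qbar ≃+* Qbar, fixes K σ ∧ y = autG σ x}

/-- `E_K = { α ∈ G : ∏_{β ∈ Orb_K(α)} β = 1 }`. -/
def EK (K : Subfield Qbar) : Set GG :=
  {x | (∏ᶠ y ∈ OrbG K x, y) = 1}

/-- `K/(K ⊓ L)` is a (possibly infinite) Galois extension. -/
def galPair (K L : Subfield Qbar) : Prop :=
  letI : Algebra ↥(K ⊓ L) ↥K := (Subfield.inclusion (inf_le_left : K ⊓ L ≤ K)).toAlgebra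
  IsGalois ↥(K ⊓ L) ↥K


namespace Stmt18Aux



lemma pow_left_injective {n : ℕ} (hn : n ≠ 0) {x y : GG} (h : x ^ n = y ^ n) : x = y := by
  have tf : IsMulTorsionFree GG := inferInstance
  by_contra hne
  have h1 : (x * y⁻¹) ^ n = 1 := by
    rw [mul_pow, h, inv_pow, mul_inv_cancel]
  have hne1 : x * y⁻¹ ≠ 1 := fun hc => hne (by
    have := mul_inv_eq_one.mp hc; exact this)
  exact hne (_root_.pow_left_injective hn h)

lemma autG_mk (σ : Qbar ≃+* Qbar) (u : Qx) :
    autG σ (QuotientGroup.mk u) = QuotientGroup.mk (Units.map (σ : Qbar →* Qbar) u) := rfl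

lemma autG_trans (σ τ : Qbar ≃+* Qbar) (x : GG) :
    autG σ (autG τ x) = autG (τ.trans σ) x := by
  induction x using QuotientGroup.induction_on with
  | H u =>
    rfl

lemma autG_refl (x : GG) : autG (RingEquiv.refl Qbar) x = x := by
  induction x using QuotientGroup.induction_on with
  | H u =>
    rfl

lemma autG_symm_apply (σ : Qbar ≃+* Qbar) (x : GG) : autG σ.symm (autG σ x) = x := by
  rw [autG_trans, RingEquiv.self_trans_symm, autG_refl]

lemma autG_apply_symm (σ : Qbar ≃+* Qbar) (x : GG) : autG σ (autG σ.symm x) = x := by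
  rw [autG_trans, RingEquiv.symm_trans_self, autG_refl]

lemma autG_injective (σ : Qbar ≃+* Qbar) : Function.Injective (autG σ) := by
  intro a b h
  have := congrArg (autG σ.symm) h
  rwa [autG_symm_apply, autG_symm_apply] at this

lemma fixes_refl (K : Subfield Qbar) : fixes K (RingEquiv.refl Qbar) := fun _ _ => rfl

lemma fixes_trans {K : Subfield Qbar} {σ τ : Qbar ≃+* Qbar} (hσ : fixes K σ) (hτ : fixes K τ) :
    fixes K (σ.trans τ) := fun x hx => by
  simp only [RingEquiv.coe_trans, Function.comp_apply, hσ x hx, hτ x hx]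

lemma fixes_symm {K : Subfield Qbar} {σ : Qbar ≃+* Qbar} (hσ : fixes K σ) :
    fixes K σ.symm := fun x hx => by
  conv_lhs => rw [← hσ x hx]
  exact σ.symm_apply_apply x

lemma fixes_mono {K K' : Subfield Qbar} (h : K' ≤ K) {σ : Qbar ≃+* Qbar} (hσ : fixes K σ) :
    fixes K' σ := fun x hx => hσ x (h hx)

open Classical in
noncomputable def toGG (z : Qbar) : GG :=
  if h : z = 0 then 1 else QuotientGroup.mk (Units.mk0 z h)

lemma integral (K : Subfield Qbar) (z : Qbar) : IsIntegral ↥K z := by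
  have h1 : IsIntegral ℚ z := (AlgebraicClosure.isAlgebraic ℚ |>.isAlgebraic z).isIntegral
  exact h1.tower_top

/-- σ(u) is a root of the minpoly of u over K, for σ fixing K. -/
lemma aeval_minpoly_map (K : Subfield Qbar) (σ : Qbar ≃+* Qbar) (hσ : fixes K σ) (z : Qbar) :
    Polynomial.aeval (σ z) (minpoly ↥K z) = 0 := by
  let σ' : Qbar →ₐ[↥K] Qbar :=
    { toRingHom := σ.toRingHom, commutes' := fun r => hσ r r.2 }
  have h : Polynomial.aeval (σ' z) (minpoly ↥K z) = σ' (Polynomial.aeval z (minpoly ↥K z)) :=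
    (Polynomial.aeval_algHom_apply σ' z _)
  exact h.trans (by rw [minpoly.aeval, map_zero])

lemma orb_finite (K : Subfield Qbar) (x : GG) : (OrbG K x).Finite := by
  obtain ⟨u, rfl⟩ := QuotientGroup.mk_surjective x
  set p := minpoly ↥K ((u : Qbar)) with hp
  have hp0 : p ≠ 0 := minpoly.ne_zero (integral K _)
  have hroots : {z : Qbar | Polynomial.aeval z p = 0}.Finite := by
    have h2 : p.map (algebraMap ↥K Qbar) ≠ 0 :=
      (Polynomial.map_ne_zero_iff (algebraMap ↥K Qbar).injective).mpr hp0
    refine (Polynomial.finite_setOf_isRoot h2).subset ?_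
    intro z hz
    simp only [Set.mem_setOf_eq, Polynomial.IsRoot, Polynomial.eval_map]
    exact hz
  refine (hroots.image toGG).subset ?_
  rintro y ⟨σ, hσ, rfl⟩
  refine ⟨σ (u : Qbar), aeval_minpoly_map K σ hσ _, ?_⟩
  rw [autG_mk, toGG]
  rw [dif_neg (show ¬ σ (u:Qbar) = 0 by simp [map_eq_zero])]
  congr 1
  ext
  rfl

lemma mem_orb_self (K : Subfield Qbar) (x : GG) : x ∈ OrbG K x :=
  ⟨RingEquiv.refl Qbar, fixes_refl K, (autG_refl x).symm⟩

lemma orb_nonempty (K : Subfield Qbar) (x : GG) : (OrbG K x).Nonempty :=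
  ⟨x, mem_orb_self K x⟩

lemma ncard_orb_ne_zero (K : Subfield Qbar) (x : GG) : (OrbG K x).ncard ≠ 0 :=
  ((Set.ncard_pos (orb_finite K x)).mpr (orb_nonempty K x)).ne'

lemma orb_eq_of_mem {K : Subfield Qbar} {x y : GG} (h : y ∈ OrbG K x) :
    OrbG K y = OrbG K x := by
  obtain ⟨σ₀, hσ₀, rfl⟩ := h
  ext z
  constructor
  · rintro ⟨τ, hτ, rfl⟩
    exact ⟨σ₀.trans τ, fixes_trans hσ₀ hτ, autG_trans τ σ₀ x⟩
  · rintro ⟨τ, hτ, rfl⟩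
    refine ⟨σ₀.symm.trans τ, fixes_trans (fixes_symm hσ₀) hτ, ?_⟩
    rw [← autG_trans, autG_symm_apply]

lemma autG_mem_orb {K : Subfield Qbar} {σ : Qbar ≃+* Qbar} (hσ : fixes K σ) {x y : GG}
    (hy : y ∈ OrbG K x) : autG σ y ∈ OrbG K x := by
  obtain ⟨τ, hτ, rfl⟩ := hy
  exact ⟨τ.trans σ, fixes_trans hτ hσ, autG_trans σ τ x⟩

lemma autG_image_orb {K : Subfield Qbar} {σ : Qbar ≃+* Qbar} (hσ : fixes K σ) (x : GG) :
    autG σ '' OrbG K x = OrbG K x := by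
  ext z
  constructor
  · rintro ⟨y, hy, rfl⟩
    exact autG_mem_orb hσ hy
  · intro hz
    exact ⟨autG σ.symm z, autG_mem_orb (fixes_symm hσ) hz, autG_apply_symm σ z⟩

/-- homomorphic image of products over finite sets. -/
lemma autG_finprod_mem (σ : Qbar ≃+* Qbar) {S : Set GG} (hS : S.Finite) :
    autG σ (∏ᶠ y ∈ S, y) = ∏ᶠ y ∈ autG σ '' S, y := by
  rw [finprod_mem_image ((autG_injective σ).injOn)]
  exact MonoidHom.map_finprod_mem _ (autG σ) hS

lemma autG_prod_orb {K : Subfield Qbar} {σ : Qbar ≃+* Qbar} (hσ : fixes K σ) (x : GG) :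
    autG σ (∏ᶠ y ∈ OrbG K x, y) = ∏ᶠ y ∈ OrbG K x, y := by
  rw [autG_finprod_mem σ (orb_finite K x), autG_image_orb hσ]
set_option synthInstance.maxHeartbeats 400000 in
set_option maxHeartbeats 1000000 in
lemma maps_into {K L : Subfield Qbar} (hgal : galPair K L) {τ : Qbar ≃+* Qbar}
    (hτ : fixes (K ⊓ L) τ) : ∀ x ∈ K, τ x ∈ K := by
  intro x hx
  letI : Algebra ↥(K ⊓ L) ↥K := (Subfield.inclusion (inf_le_left : K ⊓ L ≤ K)).toAlgebra
  haveI : IsGalois ↥(K ⊓ L) ↥K := hgal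
  letI : IsScalarTower ↥(K ⊓ L) ↥K Qbar :=
    IsScalarTower.of_algebraMap_eq (R := ↥(K ⊓ L)) (S := ↥K) (A := Qbar) (fun r => rfl)
  set x' : ↥K := ⟨x, hx⟩ with hx'
  have hmapx : algebraMap ↥K Qbar x' = x := rfl
  -- minpoly of x over K ⊓ L
  set p := minpoly ↥(K ⊓ L) x' with hp
  have hint : IsIntegral ↥(K ⊓ L) x' := by
    have h1 : IsIntegral ↥(K ⊓ L) x := integral (K ⊓ L) x
    rw [← hmapx] at h1
    exact (isIntegral_algebraMap_iff (algebraMap ↥K Qbar).injective).mp h1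
  have hp0 : p ≠ 0 := minpoly.ne_zero hint
  -- τ x is a root of p over Qbar
  have hroot : Polynomial.aeval (τ x) p = 0 := by
    have h1 := aeval_minpoly_map (K ⊓ L) τ hτ x
    rwa [show minpoly ↥(K ⊓ L) x = p by rw [hp, ← hmapx,
      minpoly.algebraMap_eq (algebraMap ↥K Qbar).injective]] at h1
  -- p splits in K
  have hsplit : (p.map (algebraMap ↥(K ⊓ L) ↥K)).Splits := Normal.splits inferInstance x'
  -- roots of p in Qbar are images of roots in K
  set q := p.map (algebraMap ↥(K ⊓ L) ↥K) with hq
  have hq0 : q ≠ 0 := (Polynomial.map_ne_zero_iff (algebraMap ↥(K ⊓ L) ↥K).injective).mpr hp0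
  have hqsplit : q.Splits := hsplit
  have hmapmap : p.map (algebraMap ↥(K ⊓ L) Qbar) = q.map (algebraMap ↥K Qbar) := by
    rw [hq, Polynomial.map_map, IsScalarTower.algebraMap_eq ↥(K ⊓ L) ↥K Qbar]
  have hmem : τ x ∈ (q.map (algebraMap ↥K Qbar)).roots := by
    rw [Polynomial.mem_roots', ← hmapmap]
    refine ⟨(Polynomial.map_ne_zero_iff (algebraMap ↥(K ⊓ L) Qbar).injective).mpr hp0, ?_⟩
    rw [Polynomial.IsRoot, Polynomial.eval_map, ← Polynomial.aeval_def]
    exact hroot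
  rw [hqsplit.roots_map _, Multiset.mem_map] at hmem
  obtain ⟨y, _, hy⟩ := hmem
  rw [← hy]
  exact y.2
/-- Sets of automorphisms closed under composition, inverse, identity. -/
structure AutCl (H : Set (Qbar ≃+* Qbar)) : Prop where
  refl : RingEquiv.refl Qbar ∈ H
  trans : ∀ {σ τ}, σ ∈ H → τ ∈ H → σ.trans τ ∈ H
  symm : ∀ {σ}, σ ∈ H → σ.symm ∈ H

/-- Orbit of `x` under a set of automorphisms. -/
def OrbH (H : Set (Qbar ≃+* Qbar)) (x : GG) : Set GG := {y | ∃ σ, σ ∈ H ∧ y = autG σ x}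

def HH (K : Subfield Qbar) : Set (Qbar ≃+* Qbar) := {σ | fixes K σ}

lemma orbH_HH (K : Subfield Qbar) (x : GG) : OrbH (HH K) x = OrbG K x := rfl

lemma autCl_HH (K : Subfield Qbar) : AutCl (HH K) :=
  ⟨fixes_refl K, fun h1 h2 => fixes_trans h1 h2, fun h => fixes_symm h⟩

/-- The generic fiber-uniformity lemma: for an equivariant map out of a finite orbit,
all fibers have the same size, and products of composites split as powers. -/
lemma fiber_lemma {X Y : Type} [DecidableEq X] [DecidableEq Y]
    (act : (Qbar ≃+* Qbar) → X → X) (actY : (Qbar ≃+* Qbar) → Y → Y)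
    (hact_trans : ∀ σ τ x, act σ (act τ x) = act (τ.trans σ) x)
    (hact_refl : ∀ x, act (RingEquiv.refl Qbar) x = x)
    (hactY_trans : ∀ σ τ y, actY σ (actY τ y) = actY (τ.trans σ) y)
    (hactY_refl : ∀ y, actY (RingEquiv.refl Qbar) y = y)
    {H : Set (Qbar ≃+* Qbar)} (hH : AutCl H)
    (f : X → Y) (hf : ∀ σ ∈ H, ∀ x, f (act σ x) = actY σ (f x))
    (x₀ : X) (sW : Finset X) (hsW : ∀ x, x ∈ sW ↔ ∃ σ ∈ H, x = act σ x₀) :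
    ∃ c : ℕ, 0 < c ∧ sW.card = c * (sW.image f).card ∧
      ∀ g : Y → GG, (∏ x ∈ sW, g (f x)) = (∏ z ∈ sW.image f, g z) ^ c := by
  have hx₀ : x₀ ∈ sW := (hsW x₀).mpr ⟨RingEquiv.refl Qbar, hH.refl, (hact_refl x₀).symm⟩
  set t := sW.image f with ht
  -- all fibers have the same cardinality
  have key : ∀ z ∈ t, (sW.filter (fun x => f x = z)).card =
      (sW.filter (fun x => f x = f x₀)).card := by
    intro z hz
    obtain ⟨x₁, hx₁, rfl⟩ := Finset.mem_image.mp hz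
    obtain ⟨σ₁, hσ₁, rfl⟩ := (hsW x₁).mp hx₁
    refine Finset.card_bij' (fun x _ => act σ₁.symm x) (fun x _ => act σ₁ x) ?_ ?_ ?_ ?_
    · intro x hx
      rw [Finset.mem_filter] at hx ⊢
      obtain ⟨hxW, hxf⟩ := hx
      obtain ⟨σ, hσ, rfl⟩ := (hsW x).mp hxW
      constructor
      · exact (hsW _).mpr ⟨σ.trans σ₁.symm, hH.trans hσ (hH.symm hσ₁), hact_trans _ _ _⟩
      · rw [hf _ (hH.symm hσ₁), hxf, hf _ hσ₁, hactY_trans, RingEquiv.self_trans_symm,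
          hactY_refl]
    · intro x hx
      rw [Finset.mem_filter] at hx ⊢
      obtain ⟨hxW, hxf⟩ := hx
      obtain ⟨σ, hσ, rfl⟩ := (hsW x).mp hxW
      constructor
      · exact (hsW _).mpr ⟨σ.trans σ₁, hH.trans hσ hσ₁, hact_trans _ _ _⟩
      · rw [hf _ hσ₁, hxf]
        exact (hf _ hσ₁ x₀).symm
    · intro x _
      show act σ₁ (act σ₁.symm x) = x
      rw [hact_trans, RingEquiv.symm_trans_self, hact_refl]
    · intro x _
      show act σ₁.symm (act σ₁ x) = x
      rw [hact_trans, RingEquiv.self_trans_symm, hact_refl]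
  refine ⟨(sW.filter (fun x => f x = f x₀)).card, ?_, ?_, ?_⟩
  · exact Finset.card_pos.mpr ⟨x₀, Finset.mem_filter.mpr ⟨hx₀, rfl⟩⟩
  · rw [Finset.card_eq_sum_card_fiberwise (fun x hx => Finset.mem_image_of_mem f hx)]
    rw [Finset.sum_congr rfl key, Finset.sum_const, smul_eq_mul, mul_comm]
  · intro g
    rw [← Finset.prod_fiberwise_of_maps_to (fun x hx => Finset.mem_image_of_mem f hx)
      (fun x => g (f x)), ← Finset.prod_pow]
    refine Finset.prod_congr rfl (fun z hz => ?_)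
    rw [← key z hz]
    calc (∏ x ∈ sW.filter (fun x => f x = z), g (f x))
        = ∏ _x ∈ sW.filter (fun x => f x = z), g z := by
          refine Finset.prod_congr rfl (fun x hx => ?_)
          rw [(Finset.mem_filter.mp hx).2]
      _ = g z ^ (sW.filter (fun x => f x = z)).card := Finset.prod_const _
noncomputable local instance : DecidableEq GG := Classical.decEq _
noncomputable local instance : DecidableEq (Finset GG) := Classical.decEq _

lemma image_autG_symm_image (ρ : Qbar ≃+* Qbar) (V : Finset GG) :
    (V.image (autG ρ)).image (autG ρ.symm) = V := by
  rw [Finset.image_image]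
  rw [show ((autG ρ.symm) ∘ (autG ρ) : GG → GG) = fun x => x from
    funext fun x => autG_symm_apply ρ x]
  exact Finset.image_id'

lemma image_autG_image_symm (ρ : Qbar ≃+* Qbar) (V : Finset GG) :
    (V.image (autG ρ.symm)).image (autG ρ) = V := by
  rw [Finset.image_image]
  rw [show ((autG ρ) ∘ (autG ρ.symm) : GG → GG) = fun x => x from
    funext fun x => autG_apply_symm ρ x]
  exact Finset.image_id'

/-- Incidence uniformity: if `M` acts transitively on `SU` and stabilizes the finite
collection `OS` of finsets, then each `z ∈ SU` lies in the same number of members of `OS`. -/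
lemma incidence_lemma {M : Set (Qbar ≃+* Qbar)} (hM : AutCl M)
    (SU : Finset GG) (OS : Finset (Finset GG))
    (htrans : ∀ z₁ ∈ SU, ∀ z₂ ∈ SU, ∃ ρ ∈ M, autG ρ z₁ = z₂)
    (hstab : ∀ ρ ∈ M, ∀ V ∈ OS, V.image (autG ρ) ∈ OS) :
    ∀ z₁ ∈ SU, ∀ z₂ ∈ SU,
      (OS.filter (fun V => z₁ ∈ V)).card = (OS.filter (fun V => z₂ ∈ V)).card := by
  intro z₁ hz₁ z₂ hz₂
  obtain ⟨ρ, hρ, hρz⟩ := htrans z₁ hz₁ z₂ hz₂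
  refine Finset.card_bij' (fun V _ => V.image (autG ρ)) (fun V _ => V.image (autG ρ.symm))
    ?_ ?_ ?_ ?_
  · intro V hV
    rw [Finset.mem_filter] at hV ⊢
    refine ⟨hstab ρ hρ V hV.1, ?_⟩
    rw [← hρz]
    exact Finset.mem_image_of_mem _ hV.2
  · intro V hV
    rw [Finset.mem_filter] at hV ⊢
    refine ⟨hstab ρ.symm (hM.symm hρ) V hV.1, ?_⟩
    have : z₁ = autG ρ.symm z₂ := by rw [← hρz, autG_symm_apply]
    rw [this]
    exact Finset.mem_image_of_mem _ hV.2
  · intro V _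
    exact image_autG_symm_image ρ V
  · intro V _
    exact image_autG_image_symm ρ V
lemma orbH_subset_orbG {H : Set (Qbar ≃+* Qbar)} {F : Subfield Qbar}
    (hHF : ∀ σ ∈ H, fixes F σ) (x : GG) : OrbH H x ⊆ OrbG F x := by
  rintro y ⟨σ, hσ, rfl⟩
  exact ⟨σ, hHF σ hσ, rfl⟩

lemma mem_orbH_self {H : Set (Qbar ≃+* Qbar)} (hH : AutCl H) (x : GG) : x ∈ OrbH H x :=
  ⟨RingEquiv.refl Qbar, hH.refl, (autG_refl x).symm⟩

lemma finprod_mem_finite {S : Set GG} (hS : S.Finite) :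
    (∏ᶠ y ∈ S, y) = ∏ y ∈ hS.toFinset, y := by
  rw [← finprod_mem_coe_finset, Set.Finite.coe_toFinset]

set_option maxHeartbeats 2000000 in
/-- The main abstract proposition. -/
lemma grand (F : Subfield Qbar) {H M : Set (Qbar ≃+* Qbar)} (hH : AutCl H) (hM : AutCl M)
    (hHF : ∀ σ ∈ H, fixes F σ) (hMF : ∀ ρ ∈ M, fixes F ρ)
    (x₀ B : GG) (S₀ : Set GG) (hS₀fin : S₀.Finite)
    (hB : B ^ S₀.ncard = ∏ᶠ y ∈ S₀, y)
    (NN : GG → GG) (hNN : NN B ^ (OrbH H B).ncard = ∏ᶠ w ∈ OrbH H B, w)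
    (hUnion : ∀ z, z ∈ OrbH M x₀ ↔ ∃ σ ∈ H, ∃ y ∈ S₀, z = autG σ y)
    (hStab : ∀ ρ ∈ M, ∀ σ ∈ H, ∃ σ' ∈ H, autG ρ '' (autG σ '' S₀) = autG σ' '' S₀) :
    NN B ^ (OrbH M x₀).ncard = ∏ᶠ z ∈ OrbH M x₀, z := by
  have hUfin : (OrbH M x₀).Finite := (orb_finite F x₀).subset (orbH_subset_orbG hMF x₀)
  have hOBfin : (OrbH H B).Finite := (orb_finite F B).subset (orbH_subset_orbG hHF B)
  set SU := hUfin.toFinset with hSU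
  set S₀F := hS₀fin.toFinset with hS₀F
  set a := S₀F.card with ha
  -- the action on pairs
  set act : (Qbar ≃+* Qbar) → GG × Finset GG → GG × Finset GG :=
    fun σ x => (autG σ x.1, x.2.image (autG σ)) with hact
  have act_trans : ∀ σ τ x, act σ (act τ x) = act (τ.trans σ) x := by
    intro σ τ x
    refine Prod.ext (autG_trans σ τ x.1) ?_
    show (x.2.image (autG τ)).image (autG σ) = x.2.image (autG (τ.trans σ))
    rw [Finset.image_image]
    exact Finset.image_congr (fun y _ => autG_trans σ τ y)
  have act_refl : ∀ x, act (RingEquiv.refl Qbar) x = x := by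
    intro x
    refine Prod.ext (autG_refl x.1) ?_
    show x.2.image (autG (RingEquiv.refl Qbar)) = x.2
    rw [show autG (RingEquiv.refl Qbar) = fun y : GG => y from funext autG_refl]
    exact Finset.image_id'
  have actF_trans : ∀ σ τ (V : Finset GG),
      (V.image (autG τ)).image (autG σ) = V.image (autG (τ.trans σ)) := by
    intro σ τ V
    rw [Finset.image_image]
    exact Finset.image_congr (fun y _ => autG_trans σ τ y)
  have actF_refl : ∀ V : Finset GG, V.image (autG (RingEquiv.refl Qbar)) = V := by
    intro V
    rw [show autG (RingEquiv.refl Qbar) = fun y : GG => y from funext autG_refl]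
    exact Finset.image_id'
  -- the orbit of the pair (B, S₀F)
  set Wset : Set (GG × Finset GG) := {x | ∃ σ ∈ H, x = act σ (B, S₀F)} with hWset
  have himgSU : ∀ σ ∈ H, ∀ y ∈ S₀F, autG σ y ∈ SU := by
    intro σ hσ y hy
    rw [hSU, Set.Finite.mem_toFinset]
    exact (hUnion _).mpr ⟨σ, hσ, y, (by rwa [hS₀F, Set.Finite.mem_toFinset] at hy), rfl⟩
  have hWfin : Wset.Finite := by
    refine Set.Finite.subset (Set.Finite.prod hOBfin
      (Set.Finite.ofFinset (p := {V : Finset GG | V ⊆ SU}) SU.powerset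
        (fun V => by simp [Finset.mem_powerset]))) ?_
    rintro x ⟨σ, hσ, rfl⟩
    constructor
    · exact ⟨σ, hσ, rfl⟩
    · show S₀F.image (autG σ) ⊆ SU
      intro z hz
      obtain ⟨y, hy, rfl⟩ := Finset.mem_image.mp hz
      exact himgSU σ hσ y hy
  set sW := hWfin.toFinset with hsWdef
  have hsW : ∀ x, x ∈ sW ↔ ∃ σ ∈ H, x = act σ (B, S₀F) := fun x => Set.Finite.mem_toFinset _
  -- fiber lemma for the two projections
  obtain ⟨c₁, hc₁pos, hc₁card, hc₁prod⟩ :=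
    fiber_lemma act (fun σ y => autG σ y) act_trans act_refl
      (fun σ τ y => autG_trans σ τ y) autG_refl hH Prod.fst
      (fun σ _ x => rfl) (B, S₀F) sW hsW
  obtain ⟨c₂, hc₂pos, hc₂card, hc₂prod⟩ :=
    fiber_lemma act (fun σ V => V.image (autG σ)) act_trans act_refl
      actF_trans actF_refl hH Prod.snd
      (fun σ _ x => rfl) (B, S₀F) sW hsW
  set t₁ := sW.image Prod.fst with ht₁
  set t₂ := sW.image Prod.snd with ht₂
  -- t₁ is the orbit of B
  have ht₁eq : t₁ = hOBfin.toFinset := by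
    ext w
    rw [ht₁, Finset.mem_image, Set.Finite.mem_toFinset]
    constructor
    · rintro ⟨x, hx, rfl⟩
      obtain ⟨σ, hσ, rfl⟩ := (hsW x).mp hx
      exact ⟨σ, hσ, rfl⟩
    · rintro ⟨σ, hσ, rfl⟩
      exact ⟨act σ (B, S₀F), (hsW _).mpr ⟨σ, hσ, rfl⟩, rfl⟩
  -- pointwise identity on the orbit
  have hBF : B ^ a = ∏ y ∈ S₀F, y := by
    rw [ha, ← Set.ncard_eq_toFinset_card S₀ hS₀fin, hB, finprod_mem_finite hS₀fin]
  have hpoint : ∀ x ∈ sW, x.1 ^ a = ∏ y ∈ x.2, y := by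
    intro x hx
    obtain ⟨σ, hσ, rfl⟩ := (hsW x).mp hx
    show (autG σ B) ^ a = ∏ y ∈ S₀F.image (autG σ), y
    rw [Finset.prod_image (fun y _ z _ h => autG_injective σ h), ← map_pow, hBF, map_prod]
  -- incidence uniformity
  have htransU : ∀ z₁ ∈ SU, ∀ z₂ ∈ SU, ∃ ρ ∈ M, autG ρ z₁ = z₂ := by
    intro z₁ hz₁ z₂ hz₂
    rw [hSU, Set.Finite.mem_toFinset] at hz₁ hz₂
    obtain ⟨ρ₁, hρ₁, rfl⟩ := hz₁
    obtain ⟨ρ₂, hρ₂, rfl⟩ := hz₂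
    refine ⟨ρ₁.symm.trans ρ₂, hM.trans (hM.symm hρ₁) hρ₂, ?_⟩
    rw [← autG_trans, autG_symm_apply]
  have hstabT₂ : ∀ ρ ∈ M, ∀ V ∈ t₂, V.image (autG ρ) ∈ t₂ := by
    intro ρ hρ V hV
    rw [ht₂, Finset.mem_image] at hV
    obtain ⟨x, hx, rfl⟩ := hV
    obtain ⟨σ, hσ, rfl⟩ := (hsW x).mp hx
    obtain ⟨σ', hσ', hσ'eq⟩ := hStab ρ hρ σ hσ
    have hcoe : ((S₀F.image (autG σ)).image (autG ρ) : Set GG) = (S₀F.image (autG σ') : Set GG) := by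
      rw [Finset.coe_image, Finset.coe_image, Finset.coe_image, hS₀F, Set.Finite.coe_toFinset]
      exact hσ'eq
    have : (S₀F.image (autG σ)).image (autG ρ) = S₀F.image (autG σ') :=
      Finset.coe_injective hcoe
    rw [ht₂]
    show (Prod.snd (act σ (B, S₀F))).image (autG ρ) ∈ _
    rw [show (Prod.snd (act σ (B, S₀F))) = S₀F.image (autG σ) from rfl, this]
    exact Finset.mem_image_of_mem _ ((hsW _).mpr ⟨σ', hσ', rfl⟩)
  have hx₀SU : x₀ ∈ SU := by
    rw [hSU, Set.Finite.mem_toFinset]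
    exact mem_orbH_self hM x₀
  set m := (t₂.filter (fun V => x₀ ∈ V)).card with hm
  have hmuni : ∀ z ∈ SU, (t₂.filter (fun V => z ∈ V)).card = m :=
    fun z hz => incidence_lemma hM SU t₂ htransU hstabT₂ z hz x₀ hx₀SU
  have hmpos : 0 < m := by
    obtain ⟨σ, hσ, y, hy, hx₀eq⟩ := (hUnion x₀).mp (mem_orbH_self hM x₀)
    have hyF : y ∈ S₀F := by rwa [hS₀F, Set.Finite.mem_toFinset]
    refine Finset.card_pos.mpr ⟨S₀F.image (autG σ), Finset.mem_filter.mpr ⟨?_, ?_⟩⟩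
    · exact Finset.mem_image_of_mem _ ((hsW _).mpr ⟨σ, hσ, rfl⟩)
    · rw [hx₀eq]; exact Finset.mem_image_of_mem _ hyF
  -- membership condition for prod_comm'
  have hcond : ∀ (V : Finset GG) (z : GG),
      V ∈ t₂ ∧ z ∈ V ↔ V ∈ t₂.filter (fun V => z ∈ V) ∧ z ∈ SU := by
    intro V z
    constructor
    · rintro ⟨hV, hzV⟩
      refine ⟨Finset.mem_filter.mpr ⟨hV, hzV⟩, ?_⟩
      rw [ht₂, Finset.mem_image] at hV
      obtain ⟨x, hx, rfl⟩ := hV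
      obtain ⟨σ, hσ, rfl⟩ := (hsW x).mp hx
      obtain ⟨y, hy, rfl⟩ := Finset.mem_image.mp hzV
      exact himgSU σ hσ y hy
    · rintro ⟨hV, _⟩
      have := Finset.mem_filter.mp hV
      exact ⟨this.1, this.2⟩
  -- double counting of products
  have hdouble : (∏ V ∈ t₂, ∏ y ∈ V, y) = (∏ z ∈ SU, z) ^ m := by
    rw [Finset.prod_comm' (f := fun (_ : Finset GG) (z : GG) => z) hcond, ← Finset.prod_pow]
    refine Finset.prod_congr rfl (fun z hz => ?_)
    rw [Finset.prod_const, hmuni z hz]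
  -- double counting of cardinalities
  have hcards : a * t₂.card = m * SU.card := by
    have h1 : (∑ V ∈ t₂, V.card) = ∑ z ∈ SU, (t₂.filter (fun V => z ∈ V)).card := by
      have h := Finset.sum_comm' (f := fun (_ : Finset GG) (_ : GG) => (1 : ℕ)) hcond
      calc (∑ V ∈ t₂, V.card) = ∑ V ∈ t₂, ∑ _z ∈ V, 1 :=
            Finset.sum_congr rfl (fun V _ => Finset.card_eq_sum_ones V)
        _ = ∑ z ∈ SU, ∑ _V ∈ t₂.filter (fun V => z ∈ V), 1 := h
        _ = ∑ z ∈ SU, (t₂.filter (fun V => z ∈ V)).card :=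
            Finset.sum_congr rfl (fun z _ => (Finset.card_eq_sum_ones _).symm)
    have h2 : ∀ V ∈ t₂, V.card = a := by
      intro V hV
      rw [ht₂, Finset.mem_image] at hV
      obtain ⟨x, hx, rfl⟩ := hV
      obtain ⟨σ, hσ, rfl⟩ := (hsW x).mp hx
      exact Finset.card_image_of_injective _ (autG_injective σ)
    rw [Finset.sum_congr rfl h2, Finset.sum_const, smul_eq_mul] at h1
    rw [Finset.sum_congr rfl hmuni, Finset.sum_const, smul_eq_mul] at h1
    calc a * t₂.card = t₂.card * a := mul_comm _ _
      _ = SU.card * m := h1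
      _ = m * SU.card := mul_comm _ _
  -- assemble
  have hk : (∏ w ∈ t₁, w) = NN B ^ (OrbH H B).ncard := by
    rw [hNN, finprod_mem_finite hOBfin, ht₁eq]
  have hkcard : t₁.card = (OrbH H B).ncard := by
    rw [ht₁eq, ← Set.ncard_eq_toFinset_card _ hOBfin]
  have hchain : NN B ^ (a * sW.card) = (∏ z ∈ SU, z) ^ (c₂ * m) := by
    calc NN B ^ (a * sW.card) = ((∏ w ∈ t₁, w) ^ a) ^ c₁ := by
          rw [hk, ← pow_mul, ← pow_mul,
            show a * sW.card = (OrbH H B).ncard * (a * c₁) from by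
              rw [hc₁card, hkcard]; ring]
      _ = (∏ w ∈ t₁, w ^ a) ^ c₁ := by rw [Finset.prod_pow]
      _ = ∏ x ∈ sW, x.1 ^ a := (hc₁prod (fun w => w ^ a)).symm
      _ = ∏ x ∈ sW, ∏ y ∈ x.2, y := Finset.prod_congr rfl hpoint
      _ = (∏ V ∈ t₂, ∏ y ∈ V, y) ^ c₂ := hc₂prod (fun V => ∏ y ∈ V, y)
      _ = (∏ z ∈ SU, z) ^ (m * c₂) := by rw [hdouble, ← pow_mul]
      _ = (∏ z ∈ SU, z) ^ (c₂ * m) := by rw [mul_comm]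
  have hexp : a * sW.card = (c₂ * m) * SU.card := by
    rw [hc₂card]
    calc a * (c₂ * t₂.card) = c₂ * (a * t₂.card) := by ring
      _ = c₂ * (m * SU.card) := by rw [hcards]
      _ = (c₂ * m) * SU.card := by ring
  have hfinal : NN B ^ SU.card = ∏ z ∈ SU, z := by
    refine pow_left_injective (n := c₂ * m) (Nat.mul_ne_zero hc₂pos.ne' hmpos.ne') ?_
    rw [← pow_mul, show SU.card * (c₂ * m) = a * sW.card from by rw [hexp]; ring, hchain]
  rw [Set.ncard_eq_toFinset_card _ hUfin, finprod_mem_finite hUfin]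
  exact hfinal
lemma conjK1 {K L : Subfield Qbar} (hgal : galPair K L) {τ σ : Qbar ≃+* Qbar}
    (hτ : fixes (K ⊓ L) τ) (hσ : fixes K σ) : fixes K ((τ.trans σ).trans τ.symm) := by
  intro x hx
  have h1 : τ x ∈ K := maps_into hgal hτ x hx
  show τ.symm (σ (τ x)) = x
  rw [hσ _ h1, RingEquiv.symm_apply_apply]

lemma conjK2 {K L : Subfield Qbar} (hgal : galPair K L) {τ σ : Qbar ≃+* Qbar}
    (hτ : fixes (K ⊓ L) τ) (hσ : fixes K σ) : fixes K ((τ.symm.trans σ).trans τ) := by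
  intro x hx
  have h1 : τ.symm x ∈ K := maps_into hgal (fixes_symm hτ) x hx
  show τ (σ (τ.symm x)) = x
  rw [hσ _ h1, RingEquiv.apply_symm_apply]

/-- The composite set `Aut(Q̄/K) ∘ Aut(Q̄/L)` (apply a `K`-fixing map first). -/
def MM (K L : Subfield Qbar) : Set (Qbar ≃+* Qbar) :=
  {ρ | ∃ σ τ, fixes K σ ∧ fixes L τ ∧ ρ = σ.trans τ}

lemma MM_fixes {K L : Subfield Qbar} : ∀ ρ ∈ MM K L, fixes (K ⊓ L) ρ := by
  rintro ρ ⟨σ, τ, hσ, hτ, rfl⟩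
  exact fixes_trans (fixes_mono inf_le_left hσ) (fixes_mono inf_le_right hτ)

lemma autCl_MM {K L : Subfield Qbar} (hgal : galPair K L) : AutCl (MM K L) := by
  constructor
  · exact ⟨RingEquiv.refl Qbar, RingEquiv.refl Qbar, fixes_refl K, fixes_refl L,
      RingEquiv.ext fun x => rfl⟩
  · rintro ρ₁ ρ₂ ⟨σ₁, τ₁, hσ₁, hτ₁, rfl⟩ ⟨σ₂, τ₂, hσ₂, hτ₂, rfl⟩
    refine ⟨σ₁.trans ((τ₁.trans σ₂).trans τ₁.symm), τ₁.trans τ₂,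
      fixes_trans hσ₁ (conjK1 hgal (fixes_mono inf_le_right hτ₁) hσ₂),
      fixes_trans hτ₁ hτ₂, RingEquiv.ext fun x => ?_⟩
    simp [RingEquiv.trans_apply, RingEquiv.apply_symm_apply]
  · rintro ρ ⟨σ, τ, hσ, hτ, rfl⟩
    refine ⟨(τ.symm.trans σ.symm).trans τ, τ.symm,
      conjK2 hgal (fixes_mono inf_le_right hτ) (fixes_symm hσ),
      fixes_symm hτ, RingEquiv.ext fun x => ?_⟩
    simp [RingEquiv.trans_apply, RingEquiv.symm_trans_apply, RingEquiv.symm_apply_apply]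

lemma image_image_autG (a b : Qbar ≃+* Qbar) (X : Set GG) :
    autG b '' (autG a '' X) = autG (a.trans b) '' X := by
  rw [Set.image_image]
  exact Set.image_congr (fun y _ => autG_trans b a y)

lemma autG_image_eq_of_ringEquiv_eq {a b : Qbar ≃+* Qbar} (h : a = b) (X : Set GG) :
    autG a '' X = autG b '' X := by rw [h]
section Instantiation

variable {K L : Subfield Qbar}

lemma hUnion₁ (hgal : galPair K L) (α : GG) : ∀ z, z ∈ OrbH (MM K L) α ↔
    ∃ σ ∈ HH K, ∃ y ∈ OrbG L α, z = autG σ y := by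
  intro z
  constructor
  · rintro ⟨ρ, ⟨σ, τ, hσ, hτ, rfl⟩, rfl⟩
    have hτF : fixes (K ⊓ L) τ := fixes_mono inf_le_right hτ
    refine ⟨(τ.symm.trans σ).trans τ, conjK2 hgal hτF hσ, autG τ α, ⟨τ, hτ, rfl⟩, ?_⟩
    rw [autG_trans, show τ.trans ((τ.symm.trans σ).trans τ) = σ.trans τ from
      RingEquiv.ext fun x => by
        simp [RingEquiv.trans_apply, RingEquiv.symm_apply_apply]]
  · rintro ⟨σ, hσ, y, ⟨τ, hτ, rfl⟩, rfl⟩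
    have hτF : fixes (K ⊓ L) τ := fixes_mono inf_le_right hτ
    refine ⟨τ.trans σ, ⟨(τ.trans σ).trans τ.symm, τ, conjK1 hgal hτF hσ, hτ,
      RingEquiv.ext fun x => by
        simp [RingEquiv.trans_apply, RingEquiv.symm_apply_apply]⟩, ?_⟩
    rw [autG_trans]

lemma hStab₁ (hgal : galPair K L) (α : GG) : ∀ ρ ∈ MM K L, ∀ σ ∈ HH K, ∃ σ' ∈ HH K,
    autG ρ '' (autG σ '' OrbG L α) = autG σ' '' OrbG L α := by
  rintro ρ ⟨σ₂, τ₂, hσ₂, hτ₂, rfl⟩ σ hσ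
  have hτF : fixes (K ⊓ L) τ₂ := fixes_mono inf_le_right hτ₂
  have hs : fixes K ((σ : Qbar ≃+* Qbar).trans σ₂) := fixes_trans hσ hσ₂
  refine ⟨(τ₂.symm.trans (σ.trans σ₂)).trans τ₂, conjK2 hgal hτF hs, ?_⟩
  rw [image_image_autG, autG_image_eq_of_ringEquiv_eq
    (show σ.trans (σ₂.trans τ₂) = τ₂.trans ((τ₂.symm.trans (σ.trans σ₂)).trans τ₂) from
      RingEquiv.ext fun x => by
        simp [RingEquiv.trans_apply, RingEquiv.symm_apply_apply]),
    ← image_image_autG, autG_image_orb hτ₂]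

lemma hUnion₂ (hgal : galPair K L) (α : GG) : ∀ z, z ∈ OrbH (MM K L) α ↔
    ∃ τ ∈ HH L, ∃ y ∈ OrbG K α, z = autG τ y := by
  intro z
  constructor
  · rintro ⟨ρ, ⟨σ, τ, hσ, hτ, rfl⟩, rfl⟩
    exact ⟨τ, hτ, autG σ α, ⟨σ, hσ, rfl⟩, (autG_trans τ σ α).symm⟩
  · rintro ⟨τ, hτ, y, ⟨σ, hσ, rfl⟩, rfl⟩
    exact ⟨σ.trans τ, ⟨σ, τ, hσ, hτ, rfl⟩, (autG_trans τ σ α)⟩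

lemma hStab₂ (hgal : galPair K L) (α : GG) : ∀ ρ ∈ MM K L, ∀ τ ∈ HH L, ∃ τ' ∈ HH L,
    autG ρ '' (autG τ '' OrbG K α) = autG τ' '' OrbG K α := by
  rintro ρ ⟨σ₂, τ₂, hσ₂, hτ₂, rfl⟩ τ hτ
  have hτF : fixes (K ⊓ L) τ := fixes_mono inf_le_right (hτ : fixes L τ)
  have hσ₇ : fixes K ((τ.trans σ₂).trans τ.symm) := conjK1 hgal hτF hσ₂
  refine ⟨(τ : Qbar ≃+* Qbar).trans τ₂, fixes_trans hτ hτ₂, ?_⟩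
  rw [image_image_autG, autG_image_eq_of_ringEquiv_eq
    (show (τ : Qbar ≃+* Qbar).trans (σ₂.trans τ₂) =
        ((τ.trans σ₂).trans τ.symm).trans (τ.trans τ₂) from
      RingEquiv.ext fun x => by
        simp [RingEquiv.trans_apply, RingEquiv.symm_apply_apply]),
    ← image_image_autG, autG_image_orb hσ₇]

end Instantiation

lemma main_one (K L : Subfield Qbar) (hgal : galPair K L)
    (NK NL : GG → GG)
    (hNK : ∀ x : GG, NK x ^ (OrbG K x).ncard = ∏ᶠ y ∈ OrbG K x, y)
    (hNL : ∀ x : GG, NL x ^ (OrbG L x).ncard = ∏ᶠ y ∈ OrbG L x, y)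
    (α : GG) : NK (NL α) = NL (NK α) := by
  have hMMcl : AutCl (MM K L) := autCl_MM hgal
  have hHKF : ∀ σ ∈ HH K, fixes (K ⊓ L) σ := fun σ h => fixes_mono inf_le_left h
  have hHLF : ∀ σ ∈ HH L, fixes (K ⊓ L) σ := fun σ h => fixes_mono inf_le_right h
  have hMMF : ∀ ρ ∈ MM K L, fixes (K ⊓ L) ρ := MM_fixes
  have h1 : NK (NL α) ^ (OrbH (MM K L) α).ncard = ∏ᶠ z ∈ OrbH (MM K L) α, z :=
    grand (K ⊓ L) (autCl_HH K) hMMcl hHKF hMMF α (NL α) (OrbG L α) (orb_finite L α)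
      (hNL α) NK (by rw [orbH_HH]; exact hNK (NL α)) (hUnion₁ hgal α) (hStab₁ hgal α)
  have h2 : NL (NK α) ^ (OrbH (MM K L) α).ncard = ∏ᶠ z ∈ OrbH (MM K L) α, z :=
    grand (K ⊓ L) (autCl_HH L) hMMcl hHLF hMMF α (NK α) (OrbG K α) (orb_finite K α)
      (hNK α) NL (by rw [orbH_HH]; exact hNL (NK α)) (hUnion₂ hgal α) (hStab₂ hgal α)
  have hUfin : (OrbH (MM K L) α).Finite :=
    (orb_finite (K ⊓ L) α).subset (orbH_subset_orbG hMMF α)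
  have hune : (OrbH (MM K L) α).ncard ≠ 0 :=
    ((Set.ncard_pos hUfin).mpr ⟨α, mem_orbH_self hMMcl α⟩).ne'
  exact pow_left_injective hune (h1.trans h2.symm)

end Stmt18Aux

/-- Theorem 7.2: if either `K/(K ∩ L)` or `L/(K ∩ L)` is a (possibly infinite) Galois
extension, then the norm-type maps `N_K` and `N_L` commute on `G`.  Here `N_K`, `N_L`
are uniquely characterized (since `G` is uniquely divisible) by
`N_K(α)^{|Orb_K(α)|} = ∏_{β ∈ Orb_K(α)} β` and likewise for `N_L`. -/
theorem stmt18 (K L : Subfield Qbar) (hGal : galPair K L ∨ galPair L K)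
    (NK NL : GG → GG)
    (hNK : ∀ x : GG, NK x ^ (OrbG K x).ncard = ∏ᶠ y ∈ OrbG K x, y)
    (hNL : ∀ x : GG, NL x ^ (OrbG L x).ncard = ∏ᶠ y ∈ OrbG L x, y)
    (α : GG) :
    NK (NL α) = NL (NK α) := by
  rcases hGal with h | h
  · exact Stmt18Aux.main_one K L h NK NL hNK hNL α
  · exact (Stmt18Aux.main_one L K h NL NK hNL hNK α).symm

end
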